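/- arXiv:2501.00291 — 2 statements merged into one kernel-verified Lean document; each statement's English description precedes it below -/
import Mathlib

section
/- Let a, b ∈ ℕ with (a,b) ≠ (0,0). Define f : ℕ × ℕ → ℤ by f(p,q) = min(p+1,q+1) − (if p ≥ a and q ≥ b then min(p−a+1, q−b+1) else 0). Then the supremum of f over ℕ × ℕ equals max(a,b), and it is attained. -/
/-!
On the diagonal point `p = q = max a b` both `a ≤ p` and `b ≤ q` hold and the subtracted
multiplicity is `1`, leaving `max a b`. Conversely, outside the cone `a ≤ p, b ≤ q` the Verma
multiplicity `min (p + 1) (q + 1)` is already at most `max a b`, and inside it, lowering the two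
arguments of a minimum by `a` and `b` lowers the minimum by at most `max a b`.
-/

/-- The weight multiplicity of `Δ(ν)/Δ(ν − aα − bβ)` at `ν − pα − qβ`. -/
def vermaQuotientMult (a b p q : ℕ) : ℤ :=
  (min (p + 1) (q + 1) : ℤ) -
    (if a ≤ p ∧ b ≤ q then min ((p : ℤ) - a + 1) ((q : ℤ) - b + 1) else 0)

theorem vermaQuotientMult_max_max (a b : ℕ) :
    vermaQuotientMult a b (max a b) (max a b) = (max a b : ℤ) := by
  have hcone : a ≤ max a b ∧ b ≤ max a b := ⟨le_max_left a b, le_max_right a b⟩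
  rw [vermaQuotientMult, if_pos hcone]
  push_cast
  omega

theorem vermaQuotientMult_le (a b p q : ℕ) : vermaQuotientMult a b p q ≤ (max a b : ℤ) := by
  rw [vermaQuotientMult]
  split_ifs with hcone
  · calc (min (p + 1) (q + 1) : ℤ) - min ((p : ℤ) - a + 1) ((q : ℤ) - b + 1)
        = min ((p : ℤ) + 1) ((q : ℤ) + 1) - min ((p + 1 : ℤ) - a) ((q + 1 : ℤ) - b) := by
          rw [sub_add_eq_add_sub, sub_add_eq_add_sub]
      _ ≤ |min ((p : ℤ) + 1) ((q : ℤ) + 1) - min ((p + 1 : ℤ) - a) ((q + 1 : ℤ) - b)| :=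
          le_abs_self _
      _ ≤ max |(p + 1 : ℤ) - ((p + 1 : ℤ) - a)| |(q + 1 : ℤ) - ((q + 1 : ℤ) - b)| :=
          abs_min_sub_min_le_max _ _ _ _
      _ = (max a b : ℤ) := by simp
  · omega

theorem max_weight_multiplicity_verma_quotient_general (a b : ℕ) :
    IsGreatest
      (Set.range (fun pq : ℕ × ℕ =>
        (min (pq.1 + 1) (pq.2 + 1) : ℤ) -
          (if a ≤ pq.1 ∧ b ≤ pq.2 then
            min ((pq.1 : ℤ) - a + 1) ((pq.2 : ℤ) - b + 1) else 0)))
      (max a b : ℤ) := by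
  refine ⟨⟨(max a b, max a b), ?_⟩, ?_⟩
  · exact vermaQuotientMult_max_max a b
  · rintro _ ⟨⟨p, q⟩, rfl⟩
    exact vermaQuotientMult_le a b p q

/-- The maximal weight multiplicity of the quotient `Δ(ν)/Δ(ν − aα − bβ)` of Verma modules
over `sl₃` equals `max a b`, and it is attained. -/
theorem max_weight_multiplicity_verma_quotient (a b : ℕ) (hab : (a, b) ≠ (0, 0)) :
    IsGreatest
      (Set.range (fun pq : ℕ × ℕ =>
        (min (pq.1 + 1) (pq.2 + 1) : ℤ) -
          (if a ≤ pq.1 ∧ b ≤ pq.2 then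
            min ((pq.1 : ℤ) - a + 1) ((pq.2 : ℤ) - b + 1) else 0)))
      (max a b : ℤ) :=
  max_weight_multiplicity_verma_quotient_general a b
end

section
/- Let λ = (λ₁,λ₂) ∈ ℚ² with λ₁ ∉ ℤ, λ₂ ∉ ℤ, λ₁+λ₂ ∉ ℤ, and not (λ₁−λ₂ ∈ ℤ and 3λ₂ ∈ ℤ). Then under the dot action of the group generated by S = [[-1,0],[1,1]] and R = [[1,1],[0,-1]] (with ρ = (1,1)), the only element w of this group with w·λ − λ ∈ ℤ² is the identity. -/
/-!
The group `⟨S, R⟩` is the Weyl group of `sl₃`, with the six elements `1, S, R, SR, RS, SRS`.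
For each `w ≠ 1` the shift `w·λ − λ` is an explicit affine function of `λ`, and its integrality
forces one of the excluded conditions: `λ₁ ∈ ℤ` for `S`, `λ₂ ∈ ℤ` for `R`, `λ₁ + λ₂ ∈ ℤ` for `SRS`,
and `λ₁ − λ₂ ∈ ℤ`, `3λ₂ ∈ ℤ` for the rotations `SR` and `RS`.
-/

/-- The dot action of a `2×2` rational matrix on `ℚ²`: `W·λ := W(λ + ρ) − ρ` with `ρ = (1,1)`. -/
def dotAct (W : Matrix (Fin 2) (Fin 2) ℚ) (l : Fin 2 → ℚ) : Fin 2 → ℚ :=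
  W.mulVec (l + ![1, 1]) - ![1, 1]

/-- The matrix of the simple reflection `s`. -/
def Smat : Matrix (Fin 2) (Fin 2) ℚ := !![-1, 0; 1, 1]

/-- The matrix of the simple reflection `r`. -/
def Rmat : Matrix (Fin 2) (Fin 2) ℚ := !![1, 1; 0, -1]

/-- `Smat` as a unit (invertible matrix). -/
def Sunit : (Matrix (Fin 2) (Fin 2) ℚ)ˣ :=
  ⟨Smat, Smat,
    by rw [show Smat = !![-1, 0; 1, 1] from rfl, Matrix.mul_fin_two, Matrix.one_fin_two]; norm_num,
    by rw [show Smat = !![-1, 0; 1, 1] from rfl, Matrix.mul_fin_two, Matrix.one_fin_two]; norm_num⟩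

/-- `Rmat` as a unit (invertible matrix). -/
def Runit : (Matrix (Fin 2) (Fin 2) ℚ)ˣ :=
  ⟨Rmat, Rmat,
    by rw [show Rmat = !![1, 1; 0, -1] from rfl, Matrix.mul_fin_two, Matrix.one_fin_two]; norm_num,
    by rw [show Rmat = !![1, 1; 0, -1] from rfl, Matrix.mul_fin_two, Matrix.one_fin_two]; norm_num⟩

namespace DotOrbit

local notation "M₂" => Matrix (Fin 2) (Fin 2) ℚ

def SRmat : M₂ := !![-1, -1; 1, 0]

def RSmat : M₂ := !![0, 1; -1, -1]

def SRSmat : M₂ := !![0, -1; -1, 0]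

def weylMatrices : Set M₂ := {1, Smat, Rmat, SRmat, RSmat, SRSmat}

theorem mul_mem_weylMatrices {A B : M₂} (hA : A ∈ weylMatrices) (hB : B ∈ weylMatrices) :
    A * B ∈ weylMatrices := by
  simp only [weylMatrices, Set.mem_insert_iff, Set.mem_singleton_iff] at hA hB ⊢
  rcases hA with rfl | rfl | rfl | rfl | rfl | rfl <;>
    rcases hB with rfl | rfl | rfl | rfl | rfl | rfl <;>
    simp only [Smat, Rmat, SRmat, RSmat, SRSmat, Matrix.mul_fin_two, Matrix.one_fin_two] <;>
    norm_num

theorem exists_mul_eq_one_of_mem_weylMatrices {A : M₂} (hA : A ∈ weylMatrices) :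
    ∃ B ∈ weylMatrices, A * B = 1 := by
  simp only [weylMatrices, Set.mem_insert_iff, Set.mem_singleton_iff] at hA
  rcases hA with rfl | rfl | rfl | rfl | rfl | rfl
  · exact ⟨1, by simp [weylMatrices], mul_one 1⟩
  · refine ⟨Smat, by simp [weylMatrices], ?_⟩
    simp only [Smat, Matrix.mul_fin_two, Matrix.one_fin_two]; norm_num
  · refine ⟨Rmat, by simp [weylMatrices], ?_⟩
    simp only [Rmat, Matrix.mul_fin_two, Matrix.one_fin_two]; norm_num
  · refine ⟨RSmat, by simp [weylMatrices], ?_⟩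
    simp only [SRmat, RSmat, Matrix.mul_fin_two, Matrix.one_fin_two]; norm_num
  · refine ⟨SRmat, by simp [weylMatrices], ?_⟩
    simp only [SRmat, RSmat, Matrix.mul_fin_two, Matrix.one_fin_two]; norm_num
  · refine ⟨SRSmat, by simp [weylMatrices], ?_⟩
    simp only [SRSmat, Matrix.mul_fin_two, Matrix.one_fin_two]; norm_num

def weylGroup : Subgroup M₂ˣ where
  carrier := {w | (w : M₂) ∈ weylMatrices}
  one_mem' := by simp [weylMatrices]
  mul_mem' ha hb := mul_mem_weylMatrices ha hb
  inv_mem' {w} hw := by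
    obtain ⟨B, hB, hwB⟩ := exists_mul_eq_one_of_mem_weylMatrices hw
    simpa [Units.inv_eq_of_mul_eq_one_right hwB] using hB

theorem closure_le_weylGroup : Subgroup.closure {Sunit, Runit} ≤ weylGroup := by
  rw [Subgroup.closure_le]
  rintro w (rfl | rfl)
  · simp [weylGroup, weylMatrices, Sunit]
  · simp [weylGroup, weylMatrices, Runit]

theorem dotAct_of_apply_zero (a b c d : ℚ) (l : Fin 2 → ℚ) :
    dotAct !![a, b; c, d] l 0 = a * (l 0 + 1) + b * (l 1 + 1) - 1 := by
  simp [dotAct, Matrix.vecHead, Matrix.vecTail]; ring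

theorem dotAct_of_apply_one (a b c d : ℚ) (l : Fin 2 → ℚ) :
    dotAct !![a, b; c, d] l 1 = c * (l 0 + 1) + d * (l 1 + 1) - 1 := by
  simp [dotAct, Matrix.vecHead, Matrix.vecTail]; ring

theorem eq_one_of_mem_weylMatrices {W : M₂} (hW : W ∈ weylMatrices) {l : Fin 2 → ℚ}
    (h0 : ¬ ∃ k : ℤ, l 0 = k) (h1 : ¬ ∃ k : ℤ, l 1 = k) (h2 : ¬ ∃ k : ℤ, l 0 + l 1 = k)
    (h3 : ¬ ((∃ k : ℤ, l 0 - l 1 = k) ∧ (∃ k : ℤ, 3 * l 1 = k)))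
    (hint : ∀ i, ∃ k : ℤ, dotAct W l i - l i = k) : W = 1 := by
  obtain ⟨a, ha⟩ := hint 0
  obtain ⟨b, hb⟩ := hint 1
  simp only [weylMatrices, Set.mem_insert_iff, Set.mem_singleton_iff] at hW
  rcases hW with rfl | rfl | rfl | rfl | rfl | rfl
  · rfl
  · rw [Smat, dotAct_of_apply_one] at hb
    exact absurd ⟨b - 1, by push_cast; linarith⟩ h0
  · rw [Rmat, dotAct_of_apply_zero] at ha
    exact absurd ⟨a - 1, by push_cast; linarith⟩ h1
  · simp only [SRmat, dotAct_of_apply_zero, dotAct_of_apply_one] at ha hb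
    exact absurd ⟨⟨b, by linarith⟩, ⟨-(a + 2 * b + 3), by push_cast; linarith⟩⟩ h3
  · simp only [RSmat, dotAct_of_apply_zero, dotAct_of_apply_one] at ha hb
    exact absurd ⟨⟨-a, by push_cast; linarith⟩, ⟨a - b - 3, by push_cast; linarith⟩⟩ h3
  · rw [SRSmat, dotAct_of_apply_zero] at ha
    exact absurd ⟨-(a + 2), by push_cast; linarith⟩ h2

end DotOrbit

/-- For a generic weight `λ` (neither integral, nor partially integral, nor of the special
one-third type), the only element `w` of the Weyl group with `w·λ − λ ∈ ℤ²` is the identity. -/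
theorem dot_orbit_generic (l : Fin 2 → ℚ)
    (h0 : ¬ ∃ k : ℤ, l 0 = (k : ℚ)) (h1 : ¬ ∃ k : ℤ, l 1 = (k : ℚ))
    (h2 : ¬ ∃ k : ℤ, l 0 + l 1 = (k : ℚ))
    (h3 : ¬ ((∃ k : ℤ, l 0 - l 1 = (k : ℚ)) ∧ (∃ k : ℤ, 3 * l 1 = (k : ℚ)))) :
    ∀ w ∈ Subgroup.closure ({Sunit, Runit} : Set (Matrix (Fin 2) (Fin 2) ℚ)ˣ),
      (∀ i, ∃ k : ℤ, dotAct (w : Matrix (Fin 2) (Fin 2) ℚ) l i - l i = (k : ℚ)) → w = 1 :=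
  fun _ hw hint => Units.ext <|
    DotOrbit.eq_one_of_mem_weylMatrices (DotOrbit.closure_le_weylGroup hw) h0 h1 h2 h3 hint
end
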